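/- arXiv:1802.07455 — 4 statements merged into one kernel-verified Lean document; each statement's English description precedes it below -/
import Mathlib

section
/- Let D and L be independent integrable nonnegative random variables with right-unbounded support (P[D>x]>0 and P[L>x]>0 for all x≥0), and let {L_n} be i.i.d. copies of L independent of D. Define τ = inf{k≥0 : L_k > D} and the restart time T^R = Σ_{i=0}^{τ-1} L_i + D. Then E[T^R] = E[D] + ∫_0^∞ (E[L·1{L≤z}] / P[L>z]) f_D(dz), where f_D is the distribution of D. -/
/-!
Let `B n = {L₀ ≤ D, …, Lₙ ≤ D}` (`failedThrough D L n`) be the event that the first `n + 1`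
attempts fail, so that `i < τ` exactly on `B i` and, once `τ < ∞` a.s. is known, `T^R = D + ∑ᵢ 1_{B i} Lᵢ`.
Conditioning on `D = z`, which is independent of the i.i.d. sequence `(Lₖ)`, gives
`E[1_{B n} Lₙ] = ∫ F(z)ⁿ E[L; L ≤ z] f_D(dz)` with `F(z) = P[L ≤ z]`, and the geometric series
`∑ₙ F(z)ⁿ = 1 / P[L > z]` yields the formula. The same computation with `Lₙ` replaced by `1`
gives `P[B n] = ∫ F^{n+1} df_D → 0`, because `F < 1` when `L` has unbounded support; this is
why `τ < ∞` a.s.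
-/

open MeasureTheory ProbabilityTheory Filter Set
open scoped ENNReal Topology

namespace ProbabilityTheory

variable {Ω α β ι : Type*} [MeasurableSpace Ω] [MeasurableSpace α] [MeasurableSpace β]
  {μ : Measure Ω}

theorem IndepFun.lintegral_comp_prodMk [IsFiniteMeasure μ] {X : Ω → α} {Y : Ω → β}
    {g : α × β → ℝ≥0∞} (hXY : IndepFun X Y μ) (hX : Measurable X) (hY : Measurable Y)
    (hg : Measurable g) :
    ∫⁻ ω, g (X ω, Y ω) ∂μ = ∫⁻ x, ∫⁻ ω, g (x, Y ω) ∂μ ∂μ.map X := by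
  rw [← lintegral_map hg (hX.prodMk hY),
    hXY.map_prod_eq_prod_map_map hX.aemeasurable hY.aemeasurable,
    lintegral_prod _ hg.aemeasurable]
  exact lintegral_congr fun x => lintegral_map (hg.comp measurable_prodMk_left) hY

theorem iIndepFun.indepFun_pi_of_option_elim {Y : Ω → β} {X : ι → Ω → β}
    (h : iIndepFun (fun i => Option.elim i Y X) μ) (hY : Measurable Y)
    (hX : ∀ i, Measurable (X i)) :
    IndepFun Y (fun ω i => X i ω) μ := by
  have hYX : ∀ i, Measurable (Option.elim i Y X) := by rintro (_ | i); exacts [hY, hX i]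
  have hsplit := indep_iSup_of_disjoint (fun i => (hYX i).comap_le) h.iIndep
    (S := {none}) (T := range some) (by simp)
  rw [IndepFun_iff_Indep]
  refine indep_of_indep_of_le_right (indep_of_indep_of_le_left hsplit ?_) ?_
  · exact le_iSup₂_of_le (f := fun i (_ : i ∈ ({none} : Set (Option ι))) => _) none rfl le_rfl
  · rw [MeasurableSpace.pi, MeasurableSpace.comap_iSup]
    refine iSup_le fun i => ?_
    rw [MeasurableSpace.comap_comp]
    exact le_iSup₂_of_le (f := fun i (_ : i ∈ range some) => _) (some i) ⟨i, rfl⟩ le_rfl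

theorem iIndepFun.of_option_elim {Y : Ω → β} {X : ι → Ω → β}
    (h : iIndepFun (fun i => Option.elim i Y X) μ) : iIndepFun X μ :=
  h.precomp (g := some) (Option.some_injective ι)

end ProbabilityTheory

section TailProbability

variable {Ω : Type*} [MeasurableSpace Ω] {P : Measure Ω} {X : Ω → ℝ}

theorem monotone_measure_le : Monotone fun z => P {ω | X ω ≤ z} :=
  fun _ _ hab => measure_mono fun _ hω => le_trans hω hab

theorem monotone_setLIntegral_le (f : Ω → ℝ≥0∞) :
    Monotone fun z => ∫⁻ ω in {ω | X ω ≤ z}, f ω ∂P :=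
  fun _ _ hab => lintegral_mono_set fun _ hω => le_trans hω hab

variable [IsProbabilityMeasure P]

theorem measure_lt_eq_one_sub_measure_le (hX : Measurable X) (z : ℝ) :
    P {ω | z < X ω} = 1 - P {ω | X ω ≤ z} := by
  rw [← prob_compl_eq_one_sub (measurableSet_le hX measurable_const)]
  congr 1
  ext ω
  simp

theorem measure_le_lt_one_of_unbounded (hX : Measurable X)
    (hsupp : ∀ x, 0 ≤ x → 0 < P {ω | x < X ω}) (z : ℝ) : P {ω | X ω ≤ z} < 1 := by
  have htail : 0 < P {ω | z < X ω} := (hsupp _ (le_max_right z 0)).trans_le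
    (measure_mono fun ω hω => (le_max_left z 0).trans_lt hω)
  rw [measure_lt_eq_one_sub_measure_le hX] at htail
  exact tsub_pos_iff_lt.1 htail

end TailProbability

section Restart

variable {Ω : Type*} {D L0 : Ω → ℝ} {L : ℕ → Ω → ℝ}

def failedThrough (D : Ω → ℝ) (L : ℕ → Ω → ℝ) (n : ℕ) : Set Ω :=
  {ω | ∀ k ≤ n, L k ω ≤ D ω}

theorem mem_failedThrough_iff_lt_sInf {ω : Ω} (hω : ∃ k, D ω < L k ω) (i : ℕ) :
    ω ∈ failedThrough D L i ↔ i < sInf {k | D ω < L k ω} := by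
  rw [Nat.sInf_def (s := {k | D ω < L k ω}) hω, Nat.lt_find_iff]
  simp [failedThrough]

theorem sum_range_sInf_eq_tsum_indicator {ω : Ω} (hω : ∃ k, D ω < L k ω)
    (f : ℕ → Ω → ℝ≥0∞) :
    ∑ i ∈ Finset.range (sInf {k | D ω < L k ω}), f i ω
      = ∑' i, (failedThrough D L i).indicator (f i) ω := by
  rw [tsum_eq_sum (s := Finset.range _) fun i hi => indicator_of_notMem
    (mt (mem_failedThrough_iff_lt_sInf hω i).1 (by simpa using hi)) _]
  exact Finset.sum_congr rfl fun i hi =>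
    (indicator_of_mem ((mem_failedThrough_iff_lt_sInf hω i).2 (Finset.mem_range.1 hi)) _).symm

variable [MeasurableSpace Ω] {P : Measure Ω}

theorem measurableSet_failedThrough (hD : Measurable D) (hL : ∀ k, Measurable (L k)) (n : ℕ) :
    MeasurableSet (failedThrough D L n) := by
  simp only [failedThrough, ofPred_forall]
  exact MeasurableSet.iInter fun k => MeasurableSet.iInter fun _ => measurableSet_le (hL k) hD

theorem lintegral_failedThrough_const (hL0 : Measurable L0) (hL : ∀ k, Measurable (L k))
    (hLi : iIndepFun L P) (hid : ∀ k, IdentDistrib (L k) L0 P P) {h : ℝ → ℝ≥0∞}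
    (hh : Measurable h) (n : ℕ) (z : ℝ) :
    ∫⁻ ω in failedThrough (fun _ => z) L n, h (L n ω) ∂P
      = P {ω | L0 ω ≤ z} ^ n * ∫⁻ ω in {ω | L0 ω ≤ z}, h (L0 ω) ∂P := by
  set ψ : ℕ → ℝ → ℝ≥0∞ := fun k x => if k = n then h x else 1
  set φ : ℕ → ℝ → ℝ≥0∞ := fun k => (Iic z).indicator (ψ k)
  have hφ : ∀ k, Measurable (φ k) := fun k => by
    refine Measurable.indicator ?_ measurableSet_Iic
    by_cases hk : k = n <;> simp [ψ, hk, hh]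
  have hfactor : ∀ k,
      ∫⁻ ω, φ k (L k ω) ∂P = ∫⁻ ω in {ω | L0 ω ≤ z}, ψ k (L0 ω) ∂P := fun k => by
    refine ((hid k).comp (hφ k)).lintegral_eq.trans ?_
    rw [← lintegral_indicator (measurableSet_le hL0 measurable_const)]
    rfl
  have hprod : ∀ ω, (failedThrough (fun _ => z) L n).indicator (fun ω => h (L n ω)) ω
      = ∏ k ∈ Finset.range (n + 1), φ k (L k ω) := fun ω => by
    simp only [φ, ← indicator_comp_right, prod_indicator_apply]
    congr 1
    · ext ω'
      simp [failedThrough]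
    · ext ω'
      simp [Finset.prod_apply, ψ]
  have hindep := lintegral_prod_eq_prod_lintegral_of_indepFun (Finset.range (n + 1)) _
    (hLi.comp φ hφ) fun k => (hφ k).comp (hL k)
  simp only [Function.comp_apply] at hindep
  rw [← lintegral_indicator (measurableSet_failedThrough measurable_const hL n),
    lintegral_congr hprod, hindep]
  simp only [hfactor, Finset.prod_range_succ, ψ, if_pos]
  congr 1
  rw [Finset.prod_congr rfl fun k hk => ?_, Finset.prod_const, Finset.card_range]
  simp only [(Finset.mem_range.1 hk).ne, if_false, setLIntegral_one]

theorem lintegral_failedThrough [IsFiniteMeasure P] (hD : Measurable D) (hL0 : Measurable L0)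
    (hL : ∀ k, Measurable (L k)) (hDL : IndepFun D (fun ω k => L k ω) P)
    (hLi : iIndepFun L P) (hid : ∀ k, IdentDistrib (L k) L0 P P) {h : ℝ → ℝ≥0∞}
    (hh : Measurable h) (n : ℕ) :
    ∫⁻ ω in failedThrough D L n, h (L n ω) ∂P
      = ∫⁻ z, P {ω | L0 ω ≤ z} ^ n * ∫⁻ ω in {ω | L0 ω ≤ z}, h (L0 ω) ∂P ∂P.map D := by
  set g : ℝ × (ℕ → ℝ) → ℝ≥0∞ :=
    (failedThrough Prod.fst (fun k (p : ℝ × (ℕ → ℝ)) => p.2 k) n).indicator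
      fun p => h (p.2 n)
  have hg : Measurable g := (hh.comp ((measurable_pi_apply n).comp measurable_snd)).indicator
    (measurableSet_failedThrough measurable_fst
      (fun k => (measurable_pi_apply k).comp measurable_snd) n)
  calc ∫⁻ ω in failedThrough D L n, h (L n ω) ∂P
      = ∫⁻ ω, g (D ω, fun k => L k ω) ∂P :=
        (lintegral_indicator (measurableSet_failedThrough hD hL n) _).symm
    _ = ∫⁻ z, ∫⁻ ω, g (z, fun k => L k ω) ∂P ∂P.map D :=
        hDL.lintegral_comp_prodMk hD (measurable_pi_lambda _ hL) hg
    _ = _ := lintegral_congr fun z =>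
        (lintegral_indicator (measurableSet_failedThrough measurable_const hL n) _).trans
          (lintegral_failedThrough_const hL0 hL hLi hid hh n z)

theorem ae_exists_lt [IsProbabilityMeasure P] (hD : Measurable D) (hL0 : Measurable L0)
    (hL : ∀ k, Measurable (L k)) (hDL : IndepFun D (fun ω k => L k ω) P)
    (hLi : iIndepFun L P) (hid : ∀ k, IdentDistrib (L k) L0 P P)
    (hF : ∀ z, P {ω | L0 ω ≤ z} < 1) :
    ∀ᵐ ω ∂P, ∃ k, D ω < L k ω := by
  set F : ℝ → ℝ≥0∞ := fun z => P {ω | L0 ω ≤ z}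
  have hle : ∀ n, P {ω | ∀ k, L k ω ≤ D ω} ≤ ∫⁻ z, F z ^ (n + 1) ∂P.map D := fun n =>
    calc P {ω | ∀ k, L k ω ≤ D ω} ≤ ∫⁻ ω in failedThrough D L n, 1 ∂P := by
          rw [setLIntegral_one]
          exact measure_mono fun ω hω k _ => hω k
      _ = ∫⁻ z, F z ^ (n + 1) ∂P.map D := by
          simp only [lintegral_failedThrough hD hL0 hL hDL hLi hid measurable_const n,
            setLIntegral_one, pow_succ, F]
  have : IsProbabilityMeasure (P.map D) := Measure.isProbabilityMeasure_map hD.aemeasurable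
  have hlim : Tendsto (fun n => ∫⁻ z, F z ^ (n + 1) ∂P.map D) atTop (𝓝 0) := by
    simpa using tendsto_lintegral_of_dominated_convergence 1
      (fun n => monotone_measure_le.measurable.pow_const (n + 1))
      (fun n => ae_of_all _ fun z => pow_le_one₀ zero_le prob_le_one) (by simp)
      (ae_of_all _ fun z =>
        (ENNReal.tendsto_pow_atTop_nhds_zero_of_lt_one (hF z)).comp (tendsto_add_atTop_nat 1))
  rw [ae_iff]
  simp only [not_exists, not_lt]
  exact le_antisymm (ge_of_tendsto' hlim hle) zero_le

theorem tsum_lintegral_failedThrough [IsProbabilityMeasure P] (hD : Measurable D)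
    (hL0 : Measurable L0) (hL : ∀ k, Measurable (L k)) (hDL : IndepFun D (fun ω k => L k ω) P)
    (hLi : iIndepFun L P) (hid : ∀ k, IdentDistrib (L k) L0 P P) {h : ℝ → ℝ≥0∞}
    (hh : Measurable h) :
    ∑' n, ∫⁻ ω in failedThrough D L n, h (L n ω) ∂P
      = ∫⁻ z, (∫⁻ ω in {ω | L0 ω ≤ z}, h (L0 ω) ∂P) / P {ω | z < L0 ω} ∂P.map D := by
  set F : ℝ → ℝ≥0∞ := fun z => P {ω | L0 ω ≤ z}
  set m : ℝ → ℝ≥0∞ := fun z => ∫⁻ ω in {ω | L0 ω ≤ z}, h (L0 ω) ∂P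
  have hterm : ∀ n, AEMeasurable (fun z => F z ^ n * m z) (P.map D) := fun n =>
    ((monotone_measure_le.measurable.pow_const n).mul
      (monotone_setLIntegral_le _).measurable).aemeasurable
  have hgeom : ∀ z, ∑' n, F z ^ n * m z = m z / P {ω | z < L0 ω} := fun z => by
    rw [ENNReal.tsum_mul_right, ENNReal.tsum_geometric, ENNReal.div_eq_inv_mul,
      measure_lt_eq_one_sub_measure_le hL0]
  simp_rw [lintegral_failedThrough hD hL0 hL hDL hLi hid hh]
  rw [← lintegral_tsum hterm, lintegral_congr hgeom]

end Restart

theorem restart_expected_time_general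
    {Ω : Type*} [MeasurableSpace Ω] (P : Measure Ω) [IsProbabilityMeasure P]
    (D L0 : Ω → ℝ) (L : ℕ → Ω → ℝ)
    (hDmeas : Measurable D) (hL0meas : Measurable L0) (hLmeas : ∀ n, Measurable (L n))
    (hDnn : ∀ ω, 0 ≤ D ω) (hLnn : ∀ n ω, 0 ≤ L n ω)
    (hLsupp : ∀ x : ℝ, 0 ≤ x → 0 < P {ω | x < L0 ω})
    -- {L n} are identically distributed copies of L0 ...
    (hid : ∀ n, IdentDistrib (L n) L0 P P)
    -- ... and the family (D, L 0, L 1, ...) is independent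
    (hindep : iIndepFun (β := fun _ : Option ℕ => ℝ)
        (fun i => Option.elim i D L) P)
    (τ : Ω → ℕ) (hτ : ∀ ω, τ ω = sInf {k : ℕ | D ω < L k ω})
    (T : Ω → ℝ) (hT : ∀ ω, T ω = (∑ i ∈ Finset.range (τ ω), L i ω) + D ω) :
    ∫⁻ ω, ENNReal.ofReal (T ω) ∂P
      = (∫⁻ ω, ENNReal.ofReal (D ω) ∂P)
        + ∫⁻ z, (∫⁻ ω in {ω' | L0 ω' ≤ z}, ENNReal.ofReal (L0 ω) ∂P)
            / P {ω | z < L0 ω} ∂(P.map D) := by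
  have hDL := hindep.indepFun_pi_of_option_elim hDmeas hLmeas
  have hLi := hindep.of_option_elim
  have hTsum : (fun ω => ENNReal.ofReal (T ω)) =ᵐ[P] fun ω =>
      (∑' i, (failedThrough D L i).indicator (fun ω => ENNReal.ofReal (L i ω)) ω)
        + ENNReal.ofReal (D ω) := by
    filter_upwards [ae_exists_lt hDmeas hL0meas hLmeas hDL hLi hid
      (measure_le_lt_one_of_unbounded hL0meas hLsupp)] with ω hω
    rw [hT, hτ, ENNReal.ofReal_add (Finset.sum_nonneg fun i _ => hLnn i ω) (hDnn ω),
      ENNReal.ofReal_sum_of_nonneg fun i _ => hLnn i ω,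
      sum_range_sInf_eq_tsum_indicator hω fun i ω => ENNReal.ofReal (L i ω)]
  rw [lintegral_congr_ae hTsum, lintegral_add_right _ hDmeas.ennreal_ofReal,
    lintegral_tsum fun i => ((hLmeas i).ennreal_ofReal.indicator
      (measurableSet_failedThrough hDmeas hLmeas i)).aemeasurable]
  simp_rw [lintegral_indicator (measurableSet_failedThrough hDmeas hLmeas _)]
  rw [tsum_lintegral_failedThrough hDmeas hL0meas hLmeas hDL hLi hid ENNReal.measurable_ofReal,
    add_comm]

/-- Expected restart time formula:
`E[T^R] = E[D] + ∫₀^∞ E[L·1{L≤z}] / P[L>z] f_D(dz)`. -/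
theorem restart_expected_time
    {Ω : Type*} [MeasurableSpace Ω] (P : Measure Ω) [IsProbabilityMeasure P]
    (D L0 : Ω → ℝ) (L : ℕ → Ω → ℝ)
    (hDmeas : Measurable D) (hL0meas : Measurable L0) (hLmeas : ∀ n, Measurable (L n))
    (hDnn : ∀ ω, 0 ≤ D ω) (hL0nn : ∀ ω, 0 ≤ L0 ω) (hLnn : ∀ n ω, 0 ≤ L n ω)
    (hDint : Integrable D P) (hL0int : Integrable L0 P)
    (hDsupp : ∀ x : ℝ, 0 ≤ x → 0 < P {ω | x < D ω})
    (hLsupp : ∀ x : ℝ, 0 ≤ x → 0 < P {ω | x < L0 ω})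
    -- {L n} are identically distributed copies of L0 ...
    (hid : ∀ n, IdentDistrib (L n) L0 P P)
    -- ... and the family (D, L 0, L 1, ...) is independent
    (hindep : iIndepFun (β := fun _ : Option ℕ => ℝ)
        (fun i => Option.elim i D L) P)
    (τ : Ω → ℕ) (hτ : ∀ ω, τ ω = sInf {k : ℕ | D ω < L k ω})
    (T : Ω → ℝ) (hT : ∀ ω, T ω = (∑ i ∈ Finset.range (τ ω), L i ω) + D ω) :
    ∫⁻ ω, ENNReal.ofReal (T ω) ∂P
      = (∫⁻ ω, ENNReal.ofReal (D ω) ∂P)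
        + ∫⁻ z, (∫⁻ ω in {ω' | L0 ω' ≤ z}, ENNReal.ofReal (L0 ω) ∂P)
            / P {ω | z < L0 ω} ∂(P.map D) :=
  restart_expected_time_general P D L0 L hDmeas hL0meas hLmeas hDnn hLnn hLsupp hid hindep τ hτ T hT
end

section
/- Let D and L be independent integrable nonnegative random variables with right-unbounded support. If D has a P-tail heavier than L (i.e., there exists z_0 such that P[D>z] ≥ P[L>z] for all z ≥ z_0), then ∫_0^∞ (E[L·1{L≤z}]/P[L>z]) f_D(dz) = ∞; in particular the expected restart time E[T^R] is infinite. -/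
/-!
Put `G z = E[L; L ≤ z]` and `g z = G z / P[L > z]`; `g` is nondecreasing. Starting beyond the
tail-comparison threshold and a point `a` with `G a > 0`, choose `z₀ < z₁ < ⋯` with
`P[D > z_{j+1}] ≤ P[D > z_j] / 2`. Then `P[z_j < D ≤ z_{j+1}] ≥ P[D > z_j] / 2` while
`g z_j ≥ G a / P[L > z_j] ≥ G a / P[D > z_j]`, so the lower sum
`∑ⱼ P[z_j < D ≤ z_{j+1}] g z_j` is infinite. It bounds `∫ g d(law D)` from below, and also
`E[T]`: on `{z_j < D ≤ z_{j+1}, L_0, …, L_i ≤ z_j}` round `i` precedes the restart and contributes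
`L_i`, independence gives `P[z_j < D ≤ z_{j+1}] P[L ≤ z_j]^i G z_j` for that part of `E[L_i; i < τ]`,
and summing the geometric series over `i` returns the `j`-th term. Here `τ < ∞` almost surely
because `P[L ≤ m] < 1` for every `m`.
-/

open MeasureTheory ProbabilityTheory Filter Set
open scoped ENNReal Topology Function

section TailsOnReal

variable (μ : Measure ℝ) [IsFiniteMeasure μ]

theorem tendsto_measure_Ioi_atTop : Tendsto (fun x => μ (Ioi x)) atTop (𝓝 0) := by
  have h := tendsto_measure_iInter_atTop (μ := μ) (fun x => measurableSet_Ioi.nullMeasurableSet)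
    (fun _ _ hxy => Ioi_subset_Ioi hxy) ⟨0, measure_ne_top μ _⟩
  have hempty : ⋂ x : ℝ, Ioi x = ∅ := iInter_eq_empty_iff.mpr fun y => ⟨y, lt_irrefl y⟩
  rwa [hempty, measure_empty] at h

variable {μ}

theorem exists_lt_inv_two_le_measure_Ioc_div {x : ℝ} (hx : μ (Ioi x) ≠ 0) :
    ∃ y, x < y ∧ 2⁻¹ ≤ μ (Ioc x y) / μ (Ioi x) := by
  have hhalf : 0 < μ (Ioi x) / 2 := ENNReal.half_pos hx
  obtain ⟨y, hy, hxy⟩ := (((tendsto_measure_Ioi_atTop μ).eventually_lt_const hhalf).and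
    (eventually_gt_atTop x)).exists
  refine ⟨y, hxy, (ENNReal.le_div_iff_mul_le (.inl hx) (.inl (measure_ne_top μ _))).2 ?_⟩
  calc 2⁻¹ * μ (Ioi x) = μ (Ioi x) - μ (Ioi x) / 2 := by
        rw [ENNReal.sub_half (measure_ne_top μ _), ENNReal.div_eq_inv_mul]
    _ ≤ μ (Ioi x) - μ (Ioi y) := tsub_le_tsub_left hy.le _
    _ = μ (Ioc x y) := by
        rw [← Ioi_sdiff_Ioi, measure_sdiff (Ioi_subset_Ioi hxy.le)
          measurableSet_Ioi.nullMeasurableSet (measure_ne_top μ _)]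

theorem exists_monotone_tsum_measure_Ioc_div_eq_top {a : ℝ}
    (hpos : ∀ x, a ≤ x → μ (Ioi x) ≠ 0) :
    ∃ z : ℕ → ℝ, Monotone z ∧ (∀ j, a ≤ z j) ∧
      ∑' j, μ (Ioc (z j) (z (j + 1))) / μ (Ioi (z j)) = ⊤ := by
  have hstep : ∀ x : Ici a, ∃ y : Ici a, x ≤ y ∧ 2⁻¹ ≤ μ (Ioc x y) / μ (Ioi x) := fun x => by
    obtain ⟨y, hxy, hy⟩ := exists_lt_inv_two_le_measure_Ioc_div (hpos x x.2)
    exact ⟨⟨y, x.2.trans hxy.le⟩, hxy.le, hy⟩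
  choose next hle hhalf using hstep
  set z : ℕ → Ici a := fun j => next^[j] ⟨a, Set.self_mem_Ici⟩
  have hz : ∀ j, z (j + 1) = next (z j) := fun j => Function.iterate_succ_apply' next j _
  refine ⟨fun j => z j, monotone_nat_of_le_succ fun j => by simp only [hz]; exact hle _,
    fun j => (z j).2, top_unique ?_⟩
  calc ⊤ = ∑' _ : ℕ, (2⁻¹ : ℝ≥0∞) := (ENNReal.tsum_const_eq_top_of_ne_zero (by simp)).symm
    _ ≤ _ := ENNReal.tsum_le_tsum fun j => by simp only [hz]; exact hhalf _

theorem exists_monotone_tsum_measure_Ioc_mul_eq_top {g : ℝ → ℝ≥0∞} {a : ℝ} {c : ℝ≥0∞}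
    (hc : c ≠ 0) (hpos : ∀ x, a ≤ x → μ (Ioi x) ≠ 0) (hg : ∀ x, a ≤ x → c / μ (Ioi x) ≤ g x) :
    ∃ z : ℕ → ℝ, Monotone z ∧ ∑' j, μ (Ioc (z j) (z (j + 1))) * g (z j) = ⊤ := by
  obtain ⟨z, hz, hza, hsum⟩ := exists_monotone_tsum_measure_Ioc_div_eq_top hpos
  refine ⟨z, hz, top_unique ?_⟩
  calc ⊤ = c * ∑' j, μ (Ioc (z j) (z (j + 1))) / μ (Ioi (z j)) := by rw [hsum, ENNReal.mul_top hc]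
    _ = ∑' j, μ (Ioc (z j) (z (j + 1))) * (c / μ (Ioi (z j))) := by
        rw [← ENNReal.tsum_mul_left]
        refine tsum_congr fun j => ?_
        rw [ENNReal.div_eq_inv_mul, ENNReal.div_eq_inv_mul]; ring
    _ ≤ _ := ENNReal.tsum_le_tsum fun j => by gcongr; exact hg _ (hza j)

end TailsOnReal

theorem tsum_measure_Ioc_mul_le_lintegral {μ : Measure ℝ} {z : ℕ → ℝ} (hz : Monotone z)
    {g : ℝ → ℝ≥0∞} (hg : Monotone g) :
    ∑' j, μ (Ioc (z j) (z (j + 1))) * g (z j) ≤ ∫⁻ x, g x ∂μ :=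
  calc ∑' j, μ (Ioc (z j) (z (j + 1))) * g (z j)
      = ∑' j, ∫⁻ _ in Ioc (z j) (z (j + 1)), g (z j) ∂μ := by
        simp only [setLIntegral_const, mul_comm]
    _ ≤ ∑' j, ∫⁻ x in Ioc (z j) (z (j + 1)), g x ∂μ := ENNReal.tsum_le_tsum fun j =>
        setLIntegral_mono' measurableSet_Ioc fun x hx => hg hx.1.le
    _ = ∫⁻ x in ⋃ j, Ioc (z j) (z (j + 1)), g x ∂μ :=
        (lintegral_iUnion (fun _ => measurableSet_Ioc) hz.pairwise_disjoint_on_Ioc_succ _).symm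
    _ ≤ ∫⁻ x, g x ∂μ := setLIntegral_le_lintegral _ _

section Independence

variable {Ω : Type*} [MeasurableSpace Ω] {P : Measure Ω}

theorem measure_iInter_preimage_eq_zero {β : Type*} [MeasurableSpace β] {X : ℕ → Ω → β}
    (hX : iIndepFun X P) {s : Set β} (hs : MeasurableSet s) {r : ℝ≥0∞} (hr : r < 1)
    (hle : ∀ k, P (X k ⁻¹' s) ≤ r) : P (⋂ k, X k ⁻¹' s) = 0 := by
  refine le_antisymm (ge_of_tendsto' (ENNReal.tendsto_pow_atTop_nhds_zero_of_lt_one hr)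
    fun n => ?_) bot_le
  calc P (⋂ k, X k ⁻¹' s) ≤ P (⋂ k ∈ Finset.range n, X k ⁻¹' s) :=
        measure_mono fun ω hω => mem_iInter₂.2 fun k _ => mem_iInter.1 hω k
    _ = ∏ k ∈ Finset.range n, P (X k ⁻¹' s) :=
        hX.measure_inter_preimage_eq_mul _ fun _ _ => hs
    _ ≤ r ^ n := by
        simpa using Finset.prod_le_prod' fun k (_ : k ∈ Finset.range n) => hle k

theorem lintegral_biInter_preimage_comp {ι β : Type*} [MeasurableSpace β] {X : ι → Ω → β}
    (hX : iIndepFun X P) (hXm : ∀ k, Measurable (X k)) {S : Finset ι} {i : ι} (hi : i ∉ S)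
    {s : ι → Set β} (hs : ∀ k, MeasurableSet (s k)) {f : β → ℝ≥0∞} (hf : Measurable f) :
    ∫⁻ ω in ⋂ k ∈ S, X k ⁻¹' s k, f (X i ω) ∂P
      = (∏ k ∈ S, P (X k ⁻¹' s k)) * ∫⁻ ω, f (X i ω) ∂P := by
  classical
  set φ : ι → β → ℝ≥0∞ := fun k => if k = i then f else (s k).indicator 1
  have hφ : ∀ k, Measurable (φ k) := fun k => by
    simp only [φ]; split_ifs
    exacts [hf, measurable_one.indicator (hs k)]
  set Y : ι → Ω → ℝ≥0∞ := fun k => φ k ∘ X k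
  have hYm : ∀ k, Measurable (Y k) := fun k => (hφ k).comp (hXm k)
  have hE : MeasurableSet (⋂ k ∈ S, X k ⁻¹' s k) :=
    Finset.measurableSet_biInter _ fun k _ => (hs k).preimage (hXm k)
  have hYS : ∏ k ∈ S, Y k = (⋂ k ∈ S, X k ⁻¹' s k).indicator 1 := by
    ext ω
    have hφS : ∀ k ∈ S, Y k ω = (s k).indicator 1 (X k ω) := fun k hk => by
      simp only [Y, φ, Function.comp_apply, if_neg (ne_of_mem_of_not_mem hk hi)]
    rw [Finset.prod_apply, Finset.prod_congr rfl hφS]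
    by_cases hω : ω ∈ ⋂ k ∈ S, X k ⁻¹' s k
    · rw [indicator_of_mem hω]
      exact Finset.prod_eq_one fun k hk =>
        indicator_of_mem (show X k ω ∈ s k from mem_iInter₂.1 hω k hk) _
    · rw [indicator_of_notMem hω]
      obtain ⟨k, hk, hks⟩ : ∃ k ∈ S, X k ω ∉ s k := by simpa using hω
      exact Finset.prod_eq_zero hk (indicator_of_notMem hks _)
  have hYi : Y i = f ∘ X i := by simp [Y, φ]
  calc ∫⁻ ω in ⋂ k ∈ S, X k ⁻¹' s k, f (X i ω) ∂P = ∫⁻ ω, ((∏ k ∈ S, Y k) * Y i) ω ∂P := by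
        rw [← lintegral_indicator hE, hYS, hYi]
        congr 1 with ω
        by_cases hω : ω ∈ ⋂ k ∈ S, X k ⁻¹' s k <;> simp [hω]
    _ = (∫⁻ ω, (∏ k ∈ S, Y k) ω ∂P) * ∫⁻ ω, Y i ω ∂P :=
        lintegral_mul_eq_lintegral_mul_lintegral_of_indepFun
          (by rw [hYS]; exact measurable_one.indicator hE) (hYm i)
          ((hX.comp φ hφ).indepFun_finsetProd_of_notMem hYm hi)
    _ = (∏ k ∈ S, P (X k ⁻¹' s k)) * ∫⁻ ω, f (X i ω) ∂P := by
        rw [hYS, lintegral_indicator_one hE, hYi,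
          hX.measure_inter_preimage_eq_mul _ fun k _ => hs k]
        rfl

end Independence

section Rounds

variable {Ω : Type*} {D : Ω → ℝ} {L : ℕ → Ω → ℝ}

theorem tsum_ite_le_ofReal_sum_range_sInf {d : ℝ} {l : ℕ → ℝ} (hd : 0 ≤ d) (hl : ∀ k, 0 ≤ l k)
    (hrestart : ∃ k, d < l k) :
    ∑' i, (if ∀ k ≤ i, l k ≤ d then ENNReal.ofReal (l i) else 0)
      ≤ ENNReal.ofReal (∑ i ∈ Finset.range (sInf {k | d < l k}), l i + d) := by
  have hlt : ∀ i, (∀ k ≤ i, l k ≤ d) → i < sInf {k | d < l k} := fun i hi =>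
    le_csInf hrestart fun k hk => not_le.1 fun hki => (hi k hki).not_gt hk
  rw [tsum_eq_sum (s := Finset.range _) fun i hi =>
    if_neg fun h => hi (Finset.mem_range.2 (hlt i h))]
  calc ∑ i ∈ Finset.range (sInf {k | d < l k}),
        (if ∀ k ≤ i, l k ≤ d then ENNReal.ofReal (l i) else 0)
      ≤ ∑ i ∈ Finset.range (sInf {k | d < l k}), ENNReal.ofReal (l i) :=
        Finset.sum_le_sum fun i _ => by split_ifs <;> simp
    _ = ENNReal.ofReal (∑ i ∈ Finset.range (sInf {k | d < l k}), l i) :=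
        (ENNReal.ofReal_sum_of_nonneg fun i _ => hl i).symm
    _ ≤ _ := ENNReal.ofReal_le_ofReal (le_add_of_nonneg_right hd)

/-- Almost surely equal to `{i < τ}`, where `τ` is the first round with `D < L τ`. -/
def roundsLE (D : Ω → ℝ) (L : ℕ → Ω → ℝ) (i : ℕ) : Set Ω := {ω | ∀ k ≤ i, L k ω ≤ D ω}

def slabRect (D : Ω → ℝ) (L : ℕ → Ω → ℝ) (i : ℕ) (u v : ℝ) : Set Ω :=
  D ⁻¹' Ioc u v ∩ ⋂ k ∈ Finset.range i, L k ⁻¹' Iic u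

theorem indicator_le_indicator_roundsLE {i : ℕ} {u v : ℝ} {ω : Ω} (hω : ω ∈ slabRect D L i u v) :
    (Iic u).indicator ENNReal.ofReal (L i ω)
      ≤ (roundsLE D L i).indicator (fun ω => ENNReal.ofReal (L i ω)) ω := by
  obtain ⟨hD, hL⟩ := hω
  by_cases hLi : L i ω ≤ u
  · have hmem : ω ∈ roundsLE D L i := fun k hk => (hk.lt_or_eq.elim
      (fun hki => (mem_iInter₂.1 hL k (Finset.mem_range.2 hki) : L k ω ≤ u))
      fun hki => hki ▸ hLi).trans hD.1.le
    rw [indicator_of_mem (show L i ω ∈ Iic u from hLi), indicator_of_mem hmem]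
  · rw [indicator_of_notMem (show L i ω ∉ Iic u from hLi)]
    exact zero_le

end Rounds

section Restart

variable {Ω : Type*} [MeasurableSpace Ω] {P : Measure Ω} {D L0 : Ω → ℝ} {L : ℕ → Ω → ℝ}

noncomputable def truncMean (P : Measure Ω) (X : Ω → ℝ) (z : ℝ) : ℝ≥0∞ :=
  ∫⁻ ω in {ω | X ω ≤ z}, ENNReal.ofReal (X ω) ∂P

theorem monotone_truncMean_div_measure_lt (P : Measure Ω) (X : Ω → ℝ) :
    Monotone fun z => truncMean P X z / P {ω | z < X ω} := fun _ _ huv =>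
  ENNReal.div_le_div (lintegral_mono_set fun _ h => le_trans h huv)
    (measure_mono fun _ h => lt_of_le_of_lt huv h)

theorem exists_truncMean_pos {X : Ω → ℝ} (hX : Measurable X) (hpos : P {ω | 0 < X ω} ≠ 0) :
    ∃ a, 0 < truncMean P X a := by
  by_contra! hzero
  refine hpos (measure_mono_null (t := ⋃ n : ℕ, {ω | 0 < X ω} ∩ {ω | X ω ≤ n}) ?_
    (measure_iUnion_null fun n => ?_))
  · intro ω hω
    obtain ⟨n, hn⟩ := exists_nat_ge (X ω)
    exact mem_iUnion.2 ⟨n, hω, hn⟩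
  · have h := (setLIntegral_pos_iff hX.ennreal_ofReal).not.1 (hzero n).not_gt
    refine measure_mono_null (fun ω hω => ?_) (le_zero_iff.1 (not_lt.1 h))
    exact ⟨(ENNReal.ofReal_pos.2 hω.1).ne', hω.2⟩

theorem truncMean_eq_lintegral_indicator {X : Ω → ℝ} (hX : Measurable X) (z : ℝ) :
    truncMean P X z = ∫⁻ ω, (Iic z).indicator ENNReal.ofReal (X ω) ∂P := by
  rw [truncMean, ← lintegral_indicator (measurableSet_le hX measurable_const)]
  rfl

theorem ae_exists_lt_of_iIndepFun [IsProbabilityMeasure P] (hL0m : Measurable L0)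
    (hL : iIndepFun L P) (hid : ∀ k, IdentDistrib (L k) L0 P P)
    (htail : ∀ m : ℕ, P {ω | (m : ℝ) < L0 ω} ≠ 0) :
    ∀ᵐ ω ∂P, ∃ k, D ω < L k ω := by
  rw [ae_iff]
  refine measure_mono_null (t := ⋃ m : ℕ, ⋂ k, L k ⁻¹' Iic (m : ℝ)) (fun ω hω => ?_)
    (measure_iUnion_null fun m => ?_)
  · obtain ⟨m, hm⟩ := exists_nat_ge (D ω)
    exact mem_iUnion.2 ⟨m, mem_iInter.2 fun k => (not_lt.1 fun h => hω ⟨k, h⟩).trans hm⟩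
  · have hcompl : L0 ⁻¹' Iic (m : ℝ) = {ω | (m : ℝ) < L0 ω}ᶜ := by ext; simp
    refine measure_iInter_preimage_eq_zero hL measurableSet_Iic ?_
      fun k => ((hid k).measure_mem_eq measurableSet_Iic).le
    rw [hcompl, prob_compl_eq_one_sub (measurableSet_lt measurable_const hL0m)]
    exact ENNReal.sub_lt_self ENNReal.one_ne_top one_ne_zero (htail m)

theorem measurableSet_roundsLE (hDm : Measurable D) (hLm : ∀ k, Measurable (L k)) (i : ℕ) :
    MeasurableSet (roundsLE D L i) := by
  simp only [roundsLE, ofPred_forall]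
  exact .iInter fun k => .iInter fun _ => measurableSet_le (hLm k) hDm

theorem measurableSet_slabRect (hDm : Measurable D) (hLm : ∀ k, Measurable (L k)) (i : ℕ)
    (u v : ℝ) : MeasurableSet (slabRect D L i u v) :=
  (measurableSet_Ioc.preimage hDm).inter
    (Finset.measurableSet_biInter _ fun k _ => measurableSet_Iic.preimage (hLm k))

theorem tsum_lintegral_slabRect_le (hDm : Measurable D) (hLm : ∀ k, Measurable (L k))
    {z : ℕ → ℝ} (hz : Monotone z) (i : ℕ) :
    ∑' j, ∫⁻ ω in slabRect D L i (z j) (z (j + 1)), (Iic (z j)).indicator ENNReal.ofReal (L i ω) ∂P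
      ≤ ∫⁻ ω, (roundsLE D L i).indicator (fun ω => ENNReal.ofReal (L i ω)) ω ∂P := by
  have hdisj : Pairwise (Disjoint on fun j => slabRect D L i (z j) (z (j + 1))) :=
    fun j j' hne =>
      ((hz.pairwise_disjoint_on_Ioc_succ hne).preimage D).mono inter_subset_left inter_subset_left
  calc _ ≤ ∑' j, ∫⁻ ω in slabRect D L i (z j) (z (j + 1)),
          (roundsLE D L i).indicator (fun ω => ENNReal.ofReal (L i ω)) ω ∂P :=
        ENNReal.tsum_le_tsum fun j => setLIntegral_mono' (measurableSet_slabRect hDm hLm i _ _)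
          fun _ hω => indicator_le_indicator_roundsLE hω
    _ = ∫⁻ ω in ⋃ j, slabRect D L i (z j) (z (j + 1)),
          (roundsLE D L i).indicator (fun ω => ENNReal.ofReal (L i ω)) ω ∂P :=
        (lintegral_iUnion (fun _ => measurableSet_slabRect hDm hLm i _ _) hdisj _).symm
    _ ≤ _ := setLIntegral_le_lintegral _ _

variable (hDm : Measurable D) (hL0m : Measurable L0) (hLm : ∀ k, Measurable (L k))
  (hid : ∀ k, IdentDistrib (L k) L0 P P)
  (hindep : iIndepFun (β := fun _ : Option ℕ => ℝ) (fun i => Option.elim i D L) P)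
include hDm hL0m hLm hid hindep

theorem lintegral_slabRect_indicator (i : ℕ) (u v : ℝ) :
    ∫⁻ ω in slabRect D L i u v, (Iic u).indicator ENNReal.ofReal (L i ω) ∂P
      = P.map D (Ioc u v) * P {ω | L0 ω ≤ u} ^ i * truncMean P L0 u := by
  have h := lintegral_biInter_preimage_comp hindep (fun o => by cases o; exacts [hDm, hLm _])
    (S := insert none ((Finset.range i).image some)) (i := some i) (by simp)
    (s := fun o => Option.elim o (Ioc u v) fun _ => Iic u)
    (fun o => by cases o; exacts [measurableSet_Ioc, measurableSet_Iic])
    (ENNReal.measurable_ofReal.indicator (measurableSet_Iic (a := u)))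
  simp only [Finset.set_biInter_insert, Finset.set_biInter_finset_image,
    Finset.prod_insert (show none ∉ (Finset.range i).image some by simp),
    Finset.prod_image fun _ _ _ _ h => Option.some_injective _ h, Option.elim] at h
  rw [slabRect, h, Measure.map_apply hDm measurableSet_Ioc,
    Finset.prod_congr rfl fun k _ => (hid k).measure_mem_eq measurableSet_Iic, Finset.prod_const,
    Finset.card_range, truncMean_eq_lintegral_indicator hL0m]
  exact congrArg _
    ((hid i).comp (ENNReal.measurable_ofReal.indicator measurableSet_Iic)).lintegral_eq

theorem tsum_map_Ioc_mul_le_lintegral_restart [IsProbabilityMeasure P] (hDnn : ∀ ω, 0 ≤ D ω)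
    (hLnn : ∀ k ω, 0 ≤ L k ω) (hrestart : ∀ᵐ ω ∂P, ∃ k, D ω < L k ω) {z : ℕ → ℝ}
    (hz : Monotone z) :
    ∑' j, P.map D (Ioc (z j) (z (j + 1))) * (truncMean P L0 (z j) / P {ω | z j < L0 ω})
      ≤ ∫⁻ ω, ENNReal.ofReal (∑ i ∈ Finset.range (sInf {k | D ω < L k ω}), L i ω + D ω) ∂P := by
  set R : ℕ → ℕ → ℝ≥0∞ := fun i j =>
    ∫⁻ ω in slabRect D L i (z j) (z (j + 1)), (Iic (z j)).indicator ENNReal.ofReal (L i ω) ∂P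
  have hgeom : ∀ j, P.map D (Ioc (z j) (z (j + 1))) * (truncMean P L0 (z j) / P {ω | z j < L0 ω})
      = ∑' i, R i j := fun j => by
    have htail : P {ω | z j < L0 ω} = 1 - P {ω | L0 ω ≤ z j} := by
      rw [← prob_compl_eq_one_sub (measurableSet_le hL0m measurable_const)]
      congr 1 with ω
      simp
    simp only [R, lintegral_slabRect_indicator hDm hL0m hLm hid hindep]
    rw [ENNReal.tsum_mul_right, ENNReal.tsum_mul_left, ENNReal.tsum_geometric, ← htail,
      div_eq_mul_inv]
    ring
  calc _ = ∑' j, ∑' i, R i j := tsum_congr hgeom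
    _ = ∑' i, ∑' j, R i j := ENNReal.tsum_comm
    _ ≤ ∑' i, ∫⁻ ω, (roundsLE D L i).indicator (fun ω => ENNReal.ofReal (L i ω)) ω ∂P :=
        ENNReal.tsum_le_tsum fun i => tsum_lintegral_slabRect_le hDm hLm hz i
    _ = ∫⁻ ω, ∑' i, (roundsLE D L i).indicator (fun ω => ENNReal.ofReal (L i ω)) ω ∂P :=
        (lintegral_tsum fun i =>
          ((hLm i).ennreal_ofReal.indicator (measurableSet_roundsLE hDm hLm i)).aemeasurable).symm
    _ ≤ _ := lintegral_mono_ae <| hrestart.mono fun ω hω => by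
        simpa only [indicator_apply, roundsLE, mem_ofPred_eq] using
          tsum_ite_le_ofReal_sum_range_sInf (hDnn ω) (fun k => hLnn k ω) hω

end Restart

theorem restart_infinite_of_heavier_tail_general
    {Ω : Type*} [MeasurableSpace Ω] (P : Measure Ω) [IsProbabilityMeasure P]
    (D L0 : Ω → ℝ) (L : ℕ → Ω → ℝ)
    (hDmeas : Measurable D) (hL0meas : Measurable L0) (hLmeas : ∀ n, Measurable (L n))
    (hDnn : ∀ ω, 0 ≤ D ω) (hLnn : ∀ n ω, 0 ≤ L n ω)
    (hDsupp : ∀ x : ℝ, 0 ≤ x → 0 < P {ω | x < D ω})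
    (hLsupp : ∀ x : ℝ, 0 ≤ x → 0 < P {ω | x < L0 ω})
    (hid : ∀ n, IdentDistrib (L n) L0 P P)
    (hindep : iIndepFun (β := fun _ : Option ℕ => ℝ)
        (fun i => Option.elim i D L) P)
    (τ : Ω → ℕ) (hτ : ∀ ω, τ ω = sInf {k : ℕ | D ω < L k ω})
    (T : Ω → ℝ) (hT : ∀ ω, T ω = (∑ i ∈ Finset.range (τ ω), L i ω) + D ω)
    -- D has a P-tail heavier than L
    (htail : ∃ z₀ : ℝ, ∀ z ≥ z₀, P {ω | z < L0 ω} ≤ P {ω | z < D ω}) :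
    (∫⁻ z, (∫⁻ ω in {ω' | L0 ω' ≤ z}, ENNReal.ofReal (L0 ω) ∂P)
        / P {ω | z < L0 ω} ∂(P.map D)) = ⊤
      ∧ ∫⁻ ω, ENNReal.ofReal (T ω) ∂P = ⊤ := by
  obtain ⟨z₀, htail⟩ := htail
  obtain ⟨a, ha⟩ := exists_truncMean_pos hL0meas (hLsupp 0 le_rfl).ne'
  set b := max a (max z₀ 0)
  have hDpos : ∀ x, b ≤ x → P.map D (Ioi x) ≠ 0 := fun x hx => by
    rw [Measure.map_apply hDmeas measurableSet_Ioi]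
    exact (hDsupp x (le_trans (by simp [b]) hx)).ne'
  have hlower : ∀ x, b ≤ x →
      truncMean P L0 a / P.map D (Ioi x) ≤ truncMean P L0 x / P {ω | x < L0 ω} := fun x hx => by
    rw [Measure.map_apply hDmeas measurableSet_Ioi]
    exact ENNReal.div_le_div (lintegral_mono_set fun ω h => h.trans ((le_max_left _ _).trans hx))
      (htail x (le_trans (by simp [b]) hx))
  obtain ⟨z, hz, hsum⟩ := exists_monotone_tsum_measure_Ioc_mul_eq_top ha.ne' hDpos hlower
  have hrestart := ae_exists_lt_of_iIndepFun (D := D) (L := L) hL0meas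
    (hindep.precomp (g := some) (Option.some_injective ℕ))
    hid fun m => (hLsupp m m.cast_nonneg).ne'
  refine ⟨eq_top_iff.2 (hsum.symm.le.trans ?_), eq_top_iff.2 (hsum.symm.le.trans ?_)⟩
  · exact tsum_measure_Ioc_mul_le_lintegral hz (monotone_truncMean_div_measure_lt P L0)
  · simp only [hT, hτ]
    exact tsum_map_Ioc_mul_le_lintegral_restart hDmeas hL0meas hLmeas hid hindep hDnn hLnn
      hrestart hz

/-- If `D` has a `P`-tail heavier than `L`, the integral in the
restart-time formula diverges and the expected restart time is infinite. -/
theorem restart_infinite_of_heavier_tail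
    {Ω : Type*} [MeasurableSpace Ω] (P : Measure Ω) [IsProbabilityMeasure P]
    (D L0 : Ω → ℝ) (L : ℕ → Ω → ℝ)
    (hDmeas : Measurable D) (hL0meas : Measurable L0) (hLmeas : ∀ n, Measurable (L n))
    (hDnn : ∀ ω, 0 ≤ D ω) (hL0nn : ∀ ω, 0 ≤ L0 ω) (hLnn : ∀ n ω, 0 ≤ L n ω)
    (hDint : Integrable D P) (hL0int : Integrable L0 P)
    (hDsupp : ∀ x : ℝ, 0 ≤ x → 0 < P {ω | x < D ω})
    (hLsupp : ∀ x : ℝ, 0 ≤ x → 0 < P {ω | x < L0 ω})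
    (hid : ∀ n, IdentDistrib (L n) L0 P P)
    (hindep : iIndepFun (β := fun _ : Option ℕ => ℝ)
        (fun i => Option.elim i D L) P)
    (τ : Ω → ℕ) (hτ : ∀ ω, τ ω = sInf {k : ℕ | D ω < L k ω})
    (T : Ω → ℝ) (hT : ∀ ω, T ω = (∑ i ∈ Finset.range (τ ω), L i ω) + D ω)
    -- D has a P-tail heavier than L
    (htail : ∃ z₀ : ℝ, ∀ z ≥ z₀, P {ω | z < L0 ω} ≤ P {ω | z < D ω}) :
    (∫⁻ z, (∫⁻ ω in {ω' | L0 ω' ≤ z}, ENNReal.ofReal (L0 ω) ∂P)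
        / P {ω | z < L0 ω} ∂(P.map D)) = ⊤
      ∧ ∫⁻ ω, ENNReal.ofReal (T ω) ∂P = ⊤ :=
  restart_infinite_of_heavier_tail_general P D L0 L hDmeas hL0meas hLmeas hDnn hLnn hDsupp hLsupp
    hid hindep τ hτ T hT htail
end

section
/- If D is heavy-tailed (for all γ>0, e^{γt}P[D>t] → ∞) and L is light-tailed (there exists γ>0 with limsup e^{γt}P[L>t] < ∞), then D has a P-tail heavier than L, i.e., there exists z_0 with P[D>z] ≥ P[L>z] for all z ≥ z_0; consequently E[T^R] = E[T^C] = ∞. -/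
open MeasureTheory ProbabilityTheory Filter Set Real
open scoped ENNReal

/-! Fix a level `t` and consider the events "`D > t`, attempts `0, …, i - 1` are at most `t` and
attempt `i` lies in `(1, t]`". On such an event attempt `i` fails and wastes more than one unit of
work, so by independence the expected wasted work is at least
`∑ᵢ P[D > t] P[L ≤ t]ⁱ P[1 < L ≤ t] = P[D > t] P[1 < L ≤ t] / P[L > t]`.
A heavy-tailed `D` against a light-tailed `L` makes `P[D > t] / P[L > t]` unbounded, which forces
`E[T^R] = E[T^C] = ∞`, and in particular `P[L > t] ≤ P[D > t]` for large `t`. -/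

lemma eventually_const_mul_le_of_heavy_of_light {f g : ℝ → ℝ} {γ C K : ℝ}
    (hf : Tendsto (fun t => exp (γ * t) * f t) atTop atTop)
    (hg : ∀ᶠ t in atTop, exp (γ * t) * g t ≤ C) (hK : 0 ≤ K) :
    ∀ᶠ t in atTop, K * g t ≤ f t := by
  filter_upwards [hg, hf.eventually_ge_atTop (K * C)] with t hgt hft
  refine le_of_mul_le_mul_left ?_ (exp_pos (γ * t))
  calc exp (γ * t) * (K * g t) = K * (exp (γ * t) * g t) := by ring
    _ ≤ K * C := mul_le_mul_of_nonneg_left hgt hK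
    _ ≤ exp (γ * t) * f t := hft

lemma tsum_measure_le_lintegral_ofReal_sum_range {Ω : Type*} [MeasurableSpace Ω]
    {P : Measure Ω} {τ : Ω → ℕ} {X : ℕ → Ω → ℝ} {E : ℕ → Set Ω}
    (hE : ∀ i, MeasurableSet (E i)) (hX : ∀ i ω, 0 ≤ X i ω)
    (h : ∀ᵐ ω ∂P, ∀ i, ω ∈ E i → i < τ ω ∧ 1 ≤ X i ω) :
    ∑' i, P (E i) ≤ ∫⁻ ω, ENNReal.ofReal (∑ i ∈ Finset.range (τ ω), X i ω) ∂P := by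
  calc ∑' i, P (E i) = ∫⁻ ω, ∑' i, (E i).indicator 1 ω ∂P := by
        rw [lintegral_tsum fun i => (measurable_one.indicator (hE i)).aemeasurable]
        simp only [lintegral_indicator_one (hE _)]
    _ ≤ _ := by
      refine lintegral_mono_ae (h.mono fun ω hω => ?_)
      rw [tsum_eq_sum fun i hi => indicator_of_notMem (fun hiE =>
        hi (Finset.mem_range.2 (hω i hiE).1)) _, ENNReal.ofReal_sum_of_nonneg fun i _ => hX i ω]
      refine Finset.sum_le_sum fun i _ => ?_
      by_cases hiE : ω ∈ E i
      · simpa [hiE] using ENNReal.one_le_ofReal.2 (hω i hiE).2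
      · simp [hiE]

lemma exists_measure_preimage_Ioc_pos {Ω : Type*} [MeasurableSpace Ω] {P : Measure Ω}
    {X : Ω → ℝ} {a : ℝ} (h : 0 < P {ω | a < X ω}) : ∃ b, 0 < P (X ⁻¹' Ioc a b) := by
  by_contra! h0
  refine h.ne' (measure_mono_null (fun ω hω => ?_)
    (measure_iUnion_null fun n : ℕ => nonpos_iff_eq_zero.1 (h0 n)))
  obtain ⟨n, hn⟩ := exists_nat_ge (X ω)
  exact mem_iUnion.2 ⟨n, hω, hn⟩

section

variable {Ω : Type*} [MeasurableSpace Ω] {P : Measure Ω} {D L0 : Ω → ℝ} {L : ℕ → Ω → ℝ}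

lemma measure_preimage_inter_biInter_preimage
    (hindep : iIndepFun (fun i => Option.elim i D L) P) (hid : ∀ n, IdentDistrib (L n) L0 P P)
    {A : Set ℝ} (hA : MeasurableSet A) {B : ℕ → Set ℝ} (hB : ∀ k, MeasurableSet (B k))
    (s : Finset ℕ) :
    P (D ⁻¹' A ∩ ⋂ k ∈ s, L k ⁻¹' B k) = P (D ⁻¹' A) * ∏ k ∈ s, P (L0 ⁻¹' B k) := by
  have h := hindep.measure_inter_preimage_eq_mul (insert none (s.map .some))
    (sets := fun j => Option.elim j A B) (fun j _ => by cases j <;> simp [hA, hB])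
  simp only [Finset.set_biInter_insert, Finset.prod_insert (by simp : none ∉ s.map .some),
    Finset.prod_map, Finset.mem_map] at h
  simpa [fun k => (hid k).measure_mem_eq (hB k)] using h

variable [IsProbabilityMeasure P]

lemma one_sub_measure_preimage_Iic {X : Ω → ℝ} (hX : AEMeasurable X P) (t : ℝ) :
    1 - P (X ⁻¹' Iic t) = P {ω | t < X ω} := by
  rw [← prob_compl_eq_one_sub₀ (hX.nullMeasurableSet_preimage measurableSet_Iic)]
  congr 1
  ext
  simp

lemma measure_iInter_le_eq_zero
    (hindep : iIndepFun (fun i => Option.elim i D L) P) (hid : ∀ n, IdentDistrib (L n) L0 P P)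
    (hLsupp : ∀ x : ℝ, 0 ≤ x → 0 < P {ω | x < L0 ω}) :
    P (⋂ k, {ω | L k ω ≤ D ω}) = 0 := by
  set N := ⋂ k, {ω | L k ω ≤ D ω}
  have hN : ∀ t : ℝ, 0 ≤ t → P (N ∩ D ⁻¹' Iic t) = 0 := by
    intro t ht
    have hF : P (L0 ⁻¹' Iic t) < 1 := tsub_pos_iff_lt.1 <| by
      rw [one_sub_measure_preimage_Iic (hid 0).aemeasurable_snd]
      exact hLsupp t ht
    refine le_antisymm (ge_of_tendsto' (ENNReal.tendsto_pow_atTop_nhds_zero_of_lt_one hF)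
      fun n => ?_) zero_le
    calc P (N ∩ D ⁻¹' Iic t) ≤ P (D ⁻¹' Iic t ∩ ⋂ k ∈ Finset.range n, L k ⁻¹' Iic t) :=
          measure_mono fun ω hω =>
            ⟨hω.2, mem_iInter₂.2 fun k _ => (mem_iInter.1 hω.1 k).trans (show D ω ≤ t from hω.2)⟩
      _ = P (D ⁻¹' Iic t) * P (L0 ⁻¹' Iic t) ^ n := by
          rw [measure_preimage_inter_biInter_preimage hindep hid measurableSet_Iic
            (fun _ => measurableSet_Iic), Finset.prod_const, Finset.card_range]
      _ ≤ P (L0 ⁻¹' Iic t) ^ n := mul_le_of_le_one_left' prob_le_one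
  refine measure_mono_null (fun ω hω => ?_) (measure_iUnion_null fun n : ℕ => hN n n.cast_nonneg)
  obtain ⟨n, hn⟩ := exists_nat_ge (D ω)
  exact mem_iUnion.2 ⟨n, hω, hn⟩

lemma mul_div_le_lintegral_sum_range_sInf (hDmeas : Measurable D)
    (hLmeas : ∀ n, Measurable (L n)) (hLnn : ∀ n ω, 0 ≤ L n ω)
    (hindep : iIndepFun (fun i => Option.elim i D L) P) (hid : ∀ n, IdentDistrib (L n) L0 P P)
    (hLsupp : ∀ x : ℝ, 0 ≤ x → 0 < P {ω | x < L0 ω}) (t : ℝ) :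
    P {ω | t < D ω} * P (L0 ⁻¹' Ioc 1 t) / P {ω | t < L0 ω} ≤
      ∫⁻ ω, ENNReal.ofReal (∑ i ∈ Finset.range (sInf {k | D ω < L k ω}), L i ω) ∂P := by
  have hB : ∀ i k : ℕ, MeasurableSet (Function.update (fun _ => Iic t) i (Ioc 1 t) k) :=
    fun i k => by rcases eq_or_ne k i with rfl | hki <;> simp [*]
  set E : ℕ → Set Ω := fun i =>
    D ⁻¹' Ioi t ∩ ⋂ k ∈ Finset.range (i + 1), L k ⁻¹' Function.update (fun _ => Iic t) i (Ioc 1 t) k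
  have hPE : ∀ i, P (E i) =
      P {ω | t < D ω} * (P (L0 ⁻¹' Iic t) ^ i * P (L0 ⁻¹' Ioc 1 t)) := fun i => by
    rw [measure_preimage_inter_biInter_preimage hindep hid measurableSet_Ioi (hB i),
      Finset.prod_range_succ, Finset.prod_congr rfl fun k hk =>
        by rw [Function.update_of_ne (Finset.mem_range.1 hk).ne], Finset.prod_const,
      Finset.card_range, Function.update_self]
    rfl
  have hsum : ∑' i, P (E i) = P {ω | t < D ω} * P (L0 ⁻¹' Ioc 1 t) / P {ω | t < L0 ω} := by
    rw [tsum_congr hPE, ENNReal.tsum_mul_left, ENNReal.tsum_mul_right, ENNReal.tsum_geometric,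
      one_sub_measure_preimage_Iic (hid 0).aemeasurable_snd, mul_left_comm,
      ← ENNReal.div_eq_inv_mul]
  rw [← hsum]
  refine tsum_measure_le_lintegral_ofReal_sum_range (fun i => (hDmeas measurableSet_Ioi).inter
    (Finset.measurableSet_biInter _ fun k _ => hLmeas k (hB i k))) hLnn ?_
  -- Off the null event where every attempt fails, `sInf` is a genuine minimum (`sInf ∅ = 0`).
  filter_upwards [measure_eq_zero_iff_ae_notMem.1 (measure_iInter_le_eq_zero hindep hid hLsupp)]
    with ω hω i hi
  simp only [E, mem_inter_iff, mem_preimage, mem_iInter, Finset.mem_range] at hi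
  obtain ⟨hD, hL⟩ := hi
  have hLi : 1 < L i ω := by
    have := hL i i.lt_succ_self
    rw [Function.update_self] at this
    exact this.1
  have hLk : ∀ k < i + 1, L k ω ≤ t := fun k hk => by
    have := hL k hk
    rw [Function.update_apply] at this
    split_ifs at this
    exacts [this.2, this]
  obtain ⟨j, hj⟩ : ∃ j, D ω < L j ω := by simpa using hω
  refine ⟨Nat.lt_of_succ_le (le_csInf ⟨j, hj⟩ fun k hk => ?_), hLi.le⟩
  by_contra! hki
  exact (hLk k hki).not_gt (hD.trans hk)

lemma lintegral_sum_range_sInf_eq_top (hDmeas : Measurable D)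
    (hLmeas : ∀ n, Measurable (L n)) (hLnn : ∀ n ω, 0 ≤ L n ω)
    (hindep : iIndepFun (fun i => Option.elim i D L) P) (hid : ∀ n, IdentDistrib (L n) L0 P P)
    (hLsupp : ∀ x : ℝ, 0 ≤ x → 0 < P {ω | x < L0 ω})
    (hdom : ∀ K : ℝ, 0 ≤ K →
      ∀ᶠ t in atTop, K * (P {ω | t < L0 ω}).toReal ≤ (P {ω | t < D ω}).toReal) :
    ∫⁻ ω, ENNReal.ofReal (∑ i ∈ Finset.range (sInf {k | D ω < L k ω}), L i ω) ∂P = ⊤ := by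
  refine ENNReal.eq_top_of_forall_nnreal_le fun r => ?_
  obtain ⟨t₀, hq⟩ := exists_measure_preimage_Ioc_pos (hLsupp 1 zero_le_one)
  set q := P (L0 ⁻¹' Ioc 1 t₀)
  have hq' : 0 < q.toReal := ENNReal.toReal_pos hq.ne' (measure_ne_top _ _)
  set K := (r : ℝ) / q.toReal
  obtain ⟨t, ⟨ht₀, ht⟩, hKt⟩ :=
    ((eventually_ge_atTop t₀).and (eventually_ge_atTop 0)).and (hdom K (by positivity)) |>.exists
  have hratio : ENNReal.ofReal K ≤ P {ω | t < D ω} / P {ω | t < L0 ω} := by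
    rw [ENNReal.le_div_iff_mul_le (Or.inl (hLsupp t ht).ne') (Or.inl (measure_ne_top _ _)),
      ← ENNReal.ofReal_toReal (measure_ne_top P {ω | t < L0 ω}),
      ← ENNReal.ofReal_mul (by positivity)]
    exact ENNReal.ofReal_le_of_le_toReal hKt
  calc (r : ℝ≥0∞) = ENNReal.ofReal K * q := by
        rw [← ENNReal.ofReal_toReal (show q ≠ ⊤ from measure_ne_top _ _),
          ← ENNReal.ofReal_mul (by positivity), div_mul_cancel₀ _ hq'.ne', ENNReal.ofReal_coe_nnreal]
    _ ≤ P {ω | t < D ω} / P {ω | t < L0 ω} * P (L0 ⁻¹' Ioc 1 t) :=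
        mul_le_mul' hratio (measure_mono (preimage_mono (Ioc_subset_Ioc_right ht₀)))
    _ = P {ω | t < D ω} * P (L0 ⁻¹' Ioc 1 t) / P {ω | t < L0 ω} := ENNReal.mul_div_right_comm.symm
    _ ≤ _ := mul_div_le_lintegral_sum_range_sInf hDmeas hLmeas hLnn hindep hid hLsupp t

end

theorem restart_checkpoint_infinite_of_heavy_light_general
    {Ω : Type*} [MeasurableSpace Ω] (P : Measure Ω) [IsProbabilityMeasure P]
    (D L0 : Ω → ℝ) (L : ℕ → Ω → ℝ)
    (hDmeas : Measurable D) (hLmeas : ∀ n, Measurable (L n))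
    (hDnn : ∀ ω, 0 ≤ D ω) (hLnn : ∀ n ω, 0 ≤ L n ω)
    (hLsupp : ∀ x : ℝ, 0 ≤ x → 0 < P {ω | x < L0 ω})
    (hid : ∀ n, IdentDistrib (L n) L0 P P)
    (hindep : iIndepFun
        (fun i => Option.elim i D L) P)
    (τ : Ω → ℕ) (hτ : ∀ ω, τ ω = sInf {k : ℕ | D ω < L k ω})
    (TR : Ω → ℝ) (hTR : ∀ ω, TR ω = (∑ i ∈ Finset.range (τ ω), L i ω) + D ω)
    (TC : Ω → ℝ) (hTC : ∀ ω, TC ω = ∑ i ∈ Finset.range (τ ω + 1), L i ω)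
    -- D is heavy-tailed
    (hheavy : ∀ γ : ℝ, 0 < γ →
        Tendsto (fun t : ℝ => exp (γ * t) * (P {ω | t < D ω}).toReal) atTop atTop)
    -- L is light-tailed
    (hlight : ∃ γ : ℝ, 0 < γ ∧ ∃ C : ℝ,
        ∀ᶠ t : ℝ in atTop, exp (γ * t) * (P {ω | t < L0 ω}).toReal ≤ C) :
    (∃ z₀ : ℝ, ∀ z ≥ z₀, P {ω | z < L0 ω} ≤ P {ω | z < D ω})
      ∧ ∫⁻ ω, ENNReal.ofReal (TR ω) ∂P = ⊤
      ∧ ∫⁻ ω, ENNReal.ofReal (TC ω) ∂P = ⊤ := by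
  obtain ⟨γ, hγ, C, hC⟩ := hlight
  have hdom (K : ℝ) (hK : 0 ≤ K) :
      ∀ᶠ t in atTop, K * (P {ω | t < L0 ω}).toReal ≤ (P {ω | t < D ω}).toReal :=
    eventually_const_mul_le_of_heavy_of_light (hheavy γ hγ) hC hK
  have hS := lintegral_sum_range_sInf_eq_top hDmeas hLmeas hLnn hindep hid hLsupp hdom
  simp only [← hτ] at hS
  refine ⟨?_, ?_, ?_⟩
  · obtain ⟨z₀, hz₀⟩ := (hdom 1 zero_le_one).exists_forall_of_atTop
    refine ⟨z₀, fun z hz => (ENNReal.toReal_le_toReal (measure_ne_top _ _)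
      (measure_ne_top _ _)).1 (by simpa using hz₀ z hz)⟩
  · refine eq_top_mono (lintegral_mono fun ω => ENNReal.ofReal_le_ofReal ?_) hS
    rw [hTR]
    linarith [hDnn ω]
  · refine eq_top_mono (lintegral_mono fun ω => ENNReal.ofReal_le_ofReal ?_) hS
    rw [hTC, Finset.sum_range_succ]
    linarith [hLnn (τ ω) ω]

/-- If `D` is heavy-tailed and `L` is light-tailed, then `D` has a
`P`-tail heavier than `L`, and consequently `E[T^R] = E[T^C] = ∞`. -/
theorem restart_checkpoint_infinite_of_heavy_light
    {Ω : Type*} [MeasurableSpace Ω] (P : Measure Ω) [IsProbabilityMeasure P]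
    (D L0 : Ω → ℝ) (L : ℕ → Ω → ℝ)
    (hDmeas : Measurable D) (hL0meas : Measurable L0) (hLmeas : ∀ n, Measurable (L n))
    (hDnn : ∀ ω, 0 ≤ D ω) (hL0nn : ∀ ω, 0 ≤ L0 ω) (hLnn : ∀ n ω, 0 ≤ L n ω)
    (hDint : Integrable D P) (hL0int : Integrable L0 P)
    (hDsupp : ∀ x : ℝ, 0 ≤ x → 0 < P {ω | x < D ω})
    (hLsupp : ∀ x : ℝ, 0 ≤ x → 0 < P {ω | x < L0 ω})
    (hid : ∀ n, IdentDistrib (L n) L0 P P)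
    (hindep : iIndepFun
        (fun i => Option.elim i D L) P)
    (τ : Ω → ℕ) (hτ : ∀ ω, τ ω = sInf {k : ℕ | D ω < L k ω})
    (TR : Ω → ℝ) (hTR : ∀ ω, TR ω = (∑ i ∈ Finset.range (τ ω), L i ω) + D ω)
    (TC : Ω → ℝ) (hTC : ∀ ω, TC ω = ∑ i ∈ Finset.range (τ ω + 1), L i ω)
    -- D is heavy-tailed
    (hheavy : ∀ γ : ℝ, 0 < γ →
        Tendsto (fun t : ℝ => exp (γ * t) * (P {ω | t < D ω}).toReal) atTop atTop)
    -- L is light-tailed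
    (hlight : ∃ γ : ℝ, 0 < γ ∧ ∃ C : ℝ,
        ∀ᶠ t : ℝ in atTop, exp (γ * t) * (P {ω | t < L0 ω}).toReal ≤ C) :
    (∃ z₀ : ℝ, ∀ z ≥ z₀, P {ω | z < L0 ω} ≤ P {ω | z < D ω})
      ∧ ∫⁻ ω, ENNReal.ofReal (TR ω) ∂P = ⊤
      ∧ ∫⁻ ω, ENNReal.ofReal (TC ω) ∂P = ⊤ :=
  restart_checkpoint_infinite_of_heavy_light_general P D L0 L hDmeas hLmeas hDnn hLnn hLsupp hid
    hindep τ hτ TR hTR TC hTC hheavy hlight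
end

section
/- If L is heavy-tailed and D is light-tailed, then L has a strict P-tail heavier than D (there exist z_0 and ε>0 with P[L>z] ≥ P[D>z]^ε for all z ≥ z_0); consequently E[T^R], E[T^C] < ∞. -/
open MeasureTheory ProbabilityTheory Filter Set Real
open scoped ENNReal Topology

/-!
A light tail is eventually below `C e^{-γt}` and a heavy tail eventually above it, so the tail
of `L` dominates that of `D` with `ε = 1`.

For the moments: if `n ≤ τ` then `L_j ≤ D` for all `j < n`, so
`T^C ≤ ∑ₙ L_n 1{L_j ≤ D, j < n}`, and `L_n` is independent of that event, whence
`E[T^C] ≤ E[L] ∑ₙ P(L_j ≤ D, j < n)`. Splitting at the threshold `tₙ = (2/γ) log n` bounds the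
`n`-th probability by `P(D > tₙ) + P(L ≤ tₙ)^n ≤ C n⁻² + (1 - n^{-1/2})^n ≤ C n⁻² + e^{-√n}`:
the light tail of `D` gives the first term, the heavy tail of `L` (at rate `γ/4`) the second.
Finally `T^R ≤ T^C + D`.
-/

lemma summable_exp_neg_rpow {s : ℝ} (hs : 0 < s) : Summable fun n : ℕ => exp (-(n : ℝ) ^ s) := by
  have hlim : Tendsto (fun n : ℕ => ((n : ℝ) ^ s) ^ (2 / s) * exp (-1 * (n : ℝ) ^ s)) atTop (𝓝 0) :=
    (tendsto_rpow_mul_exp_neg_mul_atTop_nhds_zero _ 1 one_pos).comp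
      ((tendsto_rpow_atTop hs).comp tendsto_natCast_atTop_atTop)
  refine Summable.of_norm_bounded_eventually_nat
    (summable_nat_rpow.2 (by norm_num : (-2 : ℝ) < -1)) ?_
  filter_upwards [hlim.eventually_le_const one_pos, eventually_gt_atTop 0] with n hn hn0
  have hn0' : (0 : ℝ) < n := Nat.cast_pos.2 hn0
  rw [← rpow_mul hn0'.le, mul_div_cancel₀ _ hs.ne', neg_one_mul] at hn
  rw [norm_of_nonneg (exp_pos _).le, rpow_neg hn0'.le, inv_eq_one_div,
    le_div_iff₀ (by positivity), mul_comm]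
  exact hn

section Tails

variable {d p : ℝ → ℝ} {γ C : ℝ}

lemma eventually_le_of_light_of_heavy (hd : ∀ᶠ t in atTop, exp (γ * t) * d t ≤ C)
    (hp : Tendsto (fun t => exp (γ * t) * p t) atTop atTop) : ∀ᶠ t in atTop, d t ≤ p t := by
  filter_upwards [hd, hp.eventually_ge_atTop C] with t hdt hpt
  exact le_of_mul_le_mul_left (hdt.trans hpt) (exp_pos _)

lemma summable_light_add_one_sub_heavy_pow (hγ : 0 < γ) (hd0 : ∀ t, 0 ≤ d t)
    (hp1 : ∀ t, p t ≤ 1) (hd : ∀ᶠ t in atTop, exp (γ * t) * d t ≤ C)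
    (hp : Tendsto (fun t => exp (γ / 4 * t) * p t) atTop atTop) :
    Summable fun n : ℕ => d (2 / γ * log n) + (1 - p (2 / γ * log n)) ^ n := by
  set t : ℕ → ℝ := fun n => 2 / γ * log n
  have ht : Tendsto t atTop atTop :=
    (tendsto_log_atTop.comp tendsto_natCast_atTop_atTop).const_mul_atTop (by positivity)
  have hg : Summable fun n : ℕ => C * (n : ℝ) ^ (-2 : ℝ) + exp (-(n : ℝ) ^ (1 / 2 : ℝ)) :=
    ((summable_nat_rpow.2 (by norm_num)).mul_left C).add (summable_exp_neg_rpow (by norm_num))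
  refine Summable.of_norm_bounded_eventually_nat hg ?_
  filter_upwards [ht.eventually hd, ht.eventually (hp.eventually_ge_atTop 1),
    eventually_gt_atTop 0] with n hdn hpn hn
  have hn' : (0 : ℝ) < n := Nat.cast_pos.2 hn
  have hexp : ∀ a : ℝ, exp (a * γ / 2 * t n) = (n : ℝ) ^ a := fun a => by
    rw [rpow_def_of_pos hn']
    congr 1
    simp only [t]
    field_simp
  have hd_le : d (t n) ≤ C * (n : ℝ) ^ (-2 : ℝ) := by
    rw [rpow_neg hn'.le, ← hexp 2, ← div_eq_mul_inv, le_div_iff₀ (exp_pos _), mul_comm,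
      show 2 * γ / 2 * t n = γ * t n by ring]
    exact hdn
  have hp_ge : (n : ℝ) ^ (-(1 / 2) : ℝ) ≤ p (t n) := by
    rw [rpow_neg hn'.le, ← hexp (1 / 2), inv_le_iff_one_le_mul₀' (exp_pos _),
      show 1 / 2 * γ / 2 * t n = γ / 4 * t n by ring]
    exact hpn
  have hpow : (1 - p (t n)) ^ n ≤ exp (-(n : ℝ) ^ (1 / 2 : ℝ)) :=
    calc (1 - p (t n)) ^ n ≤ exp (-p (t n)) ^ n :=
          pow_le_pow_left₀ (sub_nonneg.2 (hp1 _)) (one_sub_le_exp_neg _) n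
      _ = exp (-(n * p (t n))) := by rw [← exp_nat_mul, mul_neg]
      _ ≤ exp (-(n * (n : ℝ) ^ (-(1 / 2) : ℝ))) := by gcongr
      _ = exp (-(n : ℝ) ^ (1 / 2 : ℝ)) := by
          rw [← rpow_one_add' hn'.le (by norm_num)]
          norm_num
  rw [norm_of_nonneg (add_nonneg (hd0 _) (pow_nonneg (sub_nonneg.2 (hp1 _)) _))]
  exact add_le_add hd_le hpow

end Tails

section Independence

variable {Ω : Type*} [MeasurableSpace Ω] {P : Measure Ω}

lemma ProbabilityTheory.iIndepFun.lintegral_indicator_comp_eq_mul {ι : Type*} {β : ι → Type*}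
    {m : ∀ i, MeasurableSpace (β i)} {X : ∀ i, Ω → β i} (hX : iIndepFun X P)
    (hXm : ∀ i, Measurable (X i)) (i : ι) {g : β i → ℝ≥0∞} (hg : Measurable g) {s : Set Ω}
    (hs : MeasurableSet[⨆ j ∈ ({i}ᶜ : Set ι), (m j).comap (X j)] s) :
    ∫⁻ ω, s.indicator (fun ω => g (X i ω)) ω ∂P = (∫⁻ ω, g (X i ω) ∂P) * P s := by
  have hle : ∀ j, (m j).comap (X j) ≤ ‹MeasurableSpace Ω› := fun j => (hXm j).comap_le
  have hind := indep_iSup_of_disjoint hle hX.iIndep (disjoint_compl_right (a := ({i} : Set ι)))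
  rw [iSup_singleton] at hind
  have hs' : MeasurableSet s := iSup₂_le (fun j _ => hle j) s hs
  have hmul : ∀ ω, s.indicator (fun ω => g (X i ω)) ω = g (X i ω) * s.indicator 1 ω :=
    fun ω => by by_cases h : ω ∈ s <;> simp [h]
  rw [lintegral_congr hmul, lintegral_mul_eq_lintegral_mul_lintegral_of_independent_measurableSpace
    (f := fun ω => g (X i ω)) (g := s.indicator 1) (hle i) (iSup₂_le fun j _ => hle j) hind
    (hg.comp (comap_measurable (X i))) (measurable_const.indicator hs), lintegral_indicator_one hs']

lemma ProbabilityTheory.iIndepFun.measure_forall_lt_mem_eq_pow {β : Type*} [MeasurableSpace β]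
    {L : ℕ → Ω → β} {L0 : Ω → β} (hL : iIndepFun L P) (hid : ∀ n, IdentDistrib (L n) L0 P P)
    {s : Set β} (hs : MeasurableSet s) (n : ℕ) :
    P {ω | ∀ j < n, L j ω ∈ s} = P (L0 ⁻¹' s) ^ n := by
  have hset : {ω | ∀ j < n, L j ω ∈ s} = ⋂ j ∈ Finset.range n, L j ⁻¹' s := by
    ext ω
    simp
  rw [hset, hL.measure_inter_preimage_eq_mul _ fun _ _ => hs,
    Finset.prod_congr rfl fun j _ => (hid j).measure_mem_eq hs, Finset.prod_const,
    Finset.card_range]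

end Independence

section Restart

variable {Ω : Type*} {D L0 : Ω → ℝ} {L : ℕ → Ω → ℝ}

lemma measurableSet_forall_lt_le_comap (n : ℕ) :
    MeasurableSet[⨆ k ∈ ({some n}ᶜ : Set (Option ℕ)),
      (inferInstance : MeasurableSpace ℝ).comap (Option.elim k D L)]
      {ω | ∀ j < n, L j ω ≤ D ω} := by
  set M := ⨆ k ∈ ({some n}ᶜ : Set (Option ℕ)),
      (inferInstance : MeasurableSpace ℝ).comap (Option.elim k D L)
  have hX : ∀ k ≠ some n, Measurable[M] (Option.elim k D L) := fun k hk =>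
    measurable_iff_comap_le.2 (le_iSup₂_of_le k hk le_rfl)
  simp only [ofPred_forall]
  exact MeasurableSet.iInter fun j => MeasurableSet.iInter fun hj =>
    measurableSet_le (mδ := M) (hX (some j) (by simpa using hj.ne)) (hX none (by simp))

lemma ofReal_sum_range_succ_le_tsum_indicator (hLnn : ∀ n ω, 0 ≤ L n ω) {τ : Ω → ℕ}
    (hτ : ∀ ω, ∀ j < τ ω, L j ω ≤ D ω) (ω : Ω) :
    ENNReal.ofReal (∑ i ∈ Finset.range (τ ω + 1), L i ω) ≤
      ∑' n, {ω | ∀ j < n, L j ω ≤ D ω}.indicator (fun ω => ENNReal.ofReal (L n ω)) ω := by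
  rw [ENNReal.ofReal_sum_of_nonneg fun i _ => hLnn i ω]
  refine le_of_eq_of_le (Finset.sum_congr rfl fun i hi => ?_) (ENNReal.sum_le_tsum _)
  have hi : i ≤ τ ω := Nat.lt_succ_iff.1 (Finset.mem_range.1 hi)
  exact (indicator_of_mem (s := {ω | ∀ j < i, L j ω ≤ D ω})
    (f := fun ω => ENNReal.ofReal (L i ω)) (fun j (hj : j < i) => hτ ω j (hj.trans_le hi))).symm

variable [MeasurableSpace Ω] {P : Measure Ω} [IsProbabilityMeasure P]

lemma measureReal_forall_lt_le_le_add_pow (hL0meas : Measurable L0) (hL : iIndepFun L P)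
    (hid : ∀ n, IdentDistrib (L n) L0 P P) (t : ℝ) (n : ℕ) :
    P.real {ω | ∀ j < n, L j ω ≤ D ω} ≤
      P.real {ω | t < D ω} + (1 - P.real {ω | t < L0 ω}) ^ n := by
  have hsub : {ω | ∀ j < n, L j ω ≤ D ω} ⊆ {ω | t < D ω} ∪ {ω | ∀ j < n, L j ω ∈ Iic t} :=
    fun ω hω => (lt_or_ge t (D ω)).imp id fun hD j hj => (hω j hj).trans hD
  have hpow : P.real {ω | ∀ j < n, L j ω ∈ Iic t} = (1 - P.real {ω | t < L0 ω}) ^ n := by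
    rw [measureReal_def, hL.measure_forall_lt_mem_eq_pow hid measurableSet_Iic, ENNReal.toReal_pow,
      ← measureReal_def, ← probReal_compl_eq_one_sub (measurableSet_lt measurable_const hL0meas)]
    congr 2
    ext ω
    simp
  exact (measureReal_mono hsub).trans ((measureReal_union_le _ _).trans_eq (by rw [hpow]))

theorem lintegral_ofReal_sum_range_succ_lt_top (hDmeas : Measurable D)
    (hLmeas : ∀ n, Measurable (L n)) (hLnn : ∀ n ω, 0 ≤ L n ω)
    (hindep : iIndepFun (fun k => Option.elim k D L) P) (hid : ∀ n, IdentDistrib (L n) L0 P P)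
    (hL0int : Integrable L0 P) {τ : Ω → ℕ} (hτ : ∀ ω, ∀ j < τ ω, L j ω ≤ D ω)
    (hsum : Summable fun n => P.real {ω | ∀ j < n, L j ω ≤ D ω}) :
    ∫⁻ ω, ENNReal.ofReal (∑ i ∈ Finset.range (τ ω + 1), L i ω) ∂P < ∞ := by
  have hX : ∀ k, Measurable (Option.elim k D L) := by
    rintro (_ | n)
    exacts [hDmeas, hLmeas n]
  have hB : ∀ n, MeasurableSet {ω | ∀ j < n, L j ω ≤ D ω} := fun n =>
    iSup₂_le (fun k _ => (hX k).comap_le) _ (measurableSet_forall_lt_le_comap n)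
  have hterm : ∀ n,
      ∫⁻ ω, {ω | ∀ j < n, L j ω ≤ D ω}.indicator (fun ω => ENNReal.ofReal (L n ω)) ω ∂P
        = (∫⁻ ω, ENNReal.ofReal (L0 ω) ∂P) * P {ω | ∀ j < n, L j ω ≤ D ω} := fun n => by
    have hmean : ∫⁻ ω, ENNReal.ofReal (L n ω) ∂P = ∫⁻ ω, ENNReal.ofReal (L0 ω) ∂P :=
      ((hid n).comp ENNReal.measurable_ofReal).lintegral_eq
    rw [← hmean]
    exact hindep.lintegral_indicator_comp_eq_mul hX (some n) ENNReal.measurable_ofReal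
      (measurableSet_forall_lt_le_comap n)
  have hsum' : ∑' n, P {ω | ∀ j < n, L j ω ≤ D ω} < ∞ := by
    rw [tsum_congr fun n => (ofReal_measureReal (s := {ω | ∀ j < n, L j ω ≤ D ω})).symm,
      ← ENNReal.ofReal_tsum_of_nonneg (fun _ => measureReal_nonneg) hsum]
    exact ENNReal.ofReal_lt_top
  calc ∫⁻ ω, ENNReal.ofReal (∑ i ∈ Finset.range (τ ω + 1), L i ω) ∂P
      ≤ ∫⁻ ω, ∑' n, {ω | ∀ j < n, L j ω ≤ D ω}.indicator (fun ω => ENNReal.ofReal (L n ω)) ω ∂P :=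
        lintegral_mono (ofReal_sum_range_succ_le_tsum_indicator hLnn hτ)
    _ = ∑' n, ∫⁻ ω, {ω | ∀ j < n, L j ω ≤ D ω}.indicator (fun ω => ENNReal.ofReal (L n ω)) ω ∂P :=
        lintegral_tsum fun n => ((hLmeas n).ennreal_ofReal.indicator (hB n)).aemeasurable
    _ = (∫⁻ ω, ENNReal.ofReal (L0 ω) ∂P) * ∑' n, P {ω | ∀ j < n, L j ω ≤ D ω} := by
        simp_rw [hterm, ENNReal.tsum_mul_left]
    _ < ∞ := ENNReal.mul_lt_top hL0int.lintegral_lt_top hsum'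

end Restart

theorem restart_checkpoint_finite_of_light_heavy_general
    {Ω : Type*} [MeasurableSpace Ω] (P : Measure Ω) [IsProbabilityMeasure P]
    (D L0 : Ω → ℝ) (L : ℕ → Ω → ℝ)
    (hDmeas : Measurable D) (hL0meas : Measurable L0) (hLmeas : ∀ n, Measurable (L n))
    (hLnn : ∀ n ω, 0 ≤ L n ω)
    (hDint : Integrable D P) (hL0int : Integrable L0 P)
    (hid : ∀ n, IdentDistrib (L n) L0 P P)
    (hindep : @iIndepFun _ _ _ _ (fun _ : Option ℕ => (inferInstance : MeasurableSpace ℝ))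
        (fun i => Option.elim i D L) P)
    (τ : Ω → ℕ) (hτ : ∀ ω, τ ω = sInf {k : ℕ | D ω < L k ω})
    (TR : Ω → ℝ) (hTR : ∀ ω, TR ω = (∑ i ∈ Finset.range (τ ω), L i ω) + D ω)
    (TC : Ω → ℝ) (hTC : ∀ ω, TC ω = ∑ i ∈ Finset.range (τ ω + 1), L i ω)
    -- L is heavy-tailed
    (hheavy : ∀ γ : ℝ, 0 < γ →
        Tendsto (fun t : ℝ => exp (γ * t) * (P {ω | t < L0 ω}).toReal) atTop atTop)
    -- D is light-tailed
    (hlight : ∃ γ : ℝ, 0 < γ ∧ ∃ C : ℝ,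
        ∀ᶠ t : ℝ in atTop, exp (γ * t) * (P {ω | t < D ω}).toReal ≤ C) :
    (∃ z₀ : ℝ, ∃ ε : ℝ, 0 < ε ∧
        ∀ z ≥ z₀, (P {ω | z < D ω}) ^ ε ≤ P {ω | z < L0 ω})
      ∧ ∫⁻ ω, ENNReal.ofReal (TR ω) ∂P < ⊤
      ∧ ∫⁻ ω, ENNReal.ofReal (TC ω) ∂P < ⊤ := by
  obtain ⟨γ, hγ, C, hC⟩ := hlight
  have hL : iIndepFun L P := hindep.precomp (g := some) (Option.some_injective ℕ)
  have hτ' : ∀ ω, ∀ j < τ ω, L j ω ≤ D ω := fun ω j hj =>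
    not_lt.1 (Nat.notMem_of_lt_sInf ((hτ ω) ▸ hj))
  have hsum : Summable fun n => P.real {ω | ∀ j < n, L j ω ≤ D ω} :=
    (summable_light_add_one_sub_heavy_pow hγ (fun _ => measureReal_nonneg)
      (fun _ => measureReal_le_one) hC (hheavy (γ / 4) (by positivity))).of_nonneg_of_le
      (fun _ => measureReal_nonneg) fun n => measureReal_forall_lt_le_le_add_pow hL0meas hL hid _ n
  have hTCfin : ∫⁻ ω, ENNReal.ofReal (TC ω) ∂P < ∞ := by
    simp_rw [hTC]
    exact lintegral_ofReal_sum_range_succ_lt_top hDmeas hLmeas hLnn hindep hid hL0int hτ' hsum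
  refine ⟨?_, ?_, hTCfin⟩
  · obtain ⟨z₀, hz₀⟩ := (eventually_le_of_light_of_heavy hC (hheavy γ hγ)).exists_forall_of_atTop
    refine ⟨z₀, 1, one_pos, fun z hz => ?_⟩
    rw [ENNReal.rpow_one]
    exact (ENNReal.toReal_le_toReal (measure_ne_top _ _) (measure_ne_top _ _)).1 (hz₀ z hz)
  · have hTR_le : ∀ ω, ENNReal.ofReal (TR ω) ≤ ENNReal.ofReal (TC ω) + ENNReal.ofReal (D ω) :=
      fun ω => by
        rw [hTR, hTC, Finset.sum_range_succ]
        exact (ENNReal.ofReal_le_ofReal (by linarith [hLnn (τ ω) ω])).trans ENNReal.ofReal_add_le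
    calc ∫⁻ ω, ENNReal.ofReal (TR ω) ∂P
        ≤ ∫⁻ ω, (ENNReal.ofReal (TC ω) + ENNReal.ofReal (D ω)) ∂P := lintegral_mono hTR_le
      _ = (∫⁻ ω, ENNReal.ofReal (TC ω) ∂P) + ∫⁻ ω, ENNReal.ofReal (D ω) ∂P :=
          lintegral_add_right _ hDmeas.ennreal_ofReal
      _ < ∞ := ENNReal.add_lt_top.2 ⟨hTCfin, hDint.lintegral_lt_top⟩

/-- If `L` is heavy-tailed and `D` is light-tailed, then `L` has a
strict `P`-tail heavier than `D`; consequently `E[T^R], E[T^C] < ∞`. -/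
theorem restart_checkpoint_finite_of_light_heavy
    {Ω : Type*} [MeasurableSpace Ω] (P : Measure Ω) [IsProbabilityMeasure P]
    (D L0 : Ω → ℝ) (L : ℕ → Ω → ℝ)
    (hDmeas : Measurable D) (hL0meas : Measurable L0) (hLmeas : ∀ n, Measurable (L n))
    (hDnn : ∀ ω, 0 ≤ D ω) (hL0nn : ∀ ω, 0 ≤ L0 ω) (hLnn : ∀ n ω, 0 ≤ L n ω)
    (hDint : Integrable D P) (hL0int : Integrable L0 P)
    (hDsupp : ∀ x : ℝ, 0 ≤ x → 0 < P {ω | x < D ω})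
    (hLsupp : ∀ x : ℝ, 0 ≤ x → 0 < P {ω | x < L0 ω})
    (hid : ∀ n, IdentDistrib (L n) L0 P P)
    (hindep : @iIndepFun _ _ _ _ (fun _ : Option ℕ => (inferInstance : MeasurableSpace ℝ))
        (fun i => Option.elim i D L) P)
    (τ : Ω → ℕ) (hτ : ∀ ω, τ ω = sInf {k : ℕ | D ω < L k ω})
    (TR : Ω → ℝ) (hTR : ∀ ω, TR ω = (∑ i ∈ Finset.range (τ ω), L i ω) + D ω)
    (TC : Ω → ℝ) (hTC : ∀ ω, TC ω = ∑ i ∈ Finset.range (τ ω + 1), L i ω)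
    -- L is heavy-tailed
    (hheavy : ∀ γ : ℝ, 0 < γ →
        Tendsto (fun t : ℝ => exp (γ * t) * (P {ω | t < L0 ω}).toReal) atTop atTop)
    -- D is light-tailed
    (hlight : ∃ γ : ℝ, 0 < γ ∧ ∃ C : ℝ,
        ∀ᶠ t : ℝ in atTop, exp (γ * t) * (P {ω | t < D ω}).toReal ≤ C) :
    (∃ z₀ : ℝ, ∃ ε : ℝ, 0 < ε ∧
        ∀ z ≥ z₀, (P {ω | z < D ω}) ^ ε ≤ P {ω | z < L0 ω})
      ∧ ∫⁻ ω, ENNReal.ofReal (TR ω) ∂P < ⊤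
      ∧ ∫⁻ ω, ENNReal.ofReal (TC ω) ∂P < ⊤ :=
  restart_checkpoint_finite_of_light_heavy_general P D L0 L hDmeas hL0meas hLmeas hLnn hDint hL0int
    hid hindep τ hτ TR hTR TC hTC hheavy hlight
end
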